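/- arXiv:2304.02825 — 4 statements merged into one kernel-verified Lean document; each statement's English description precedes it below -/
import Mathlib

section
/- Let n ≥ 1 and let W be an n×n integer matrix. Define n×n matrices W' and W'' by W'_{ij} = n·W_{ij} + (j−1) and W''_{ij} = n·W_{ij}, and let K = W' ⋆ W'' be their distance product. Then for all indices i, j, the floor ⌊K_{ij}/n⌋ equals (W ⋆ W)_{ij}; that is, entrywise floor-division of K by n recovers the distance-product square of W. -/
/-- The distance (min-plus) product of two `n × n` integer matrices,
`(A ⋆ B) i j = min_k (A i k + B k j)`. -/
def distProd {n : ℕ} (A B : Fin n → Fin n → ℤ) : Fin n → Fin n → ℤ :=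
  fun i j => Finset.univ.inf' ⟨i, Finset.mem_univ i⟩ fun k => A i k + B k j

/-- With `W'_{ij} = n·W_{ij} + (j−1)` and `W''_{ij} = n·W_{ij}`
and `K = W' ⋆ W''`, the entrywise floor `⌊K_{ij}/n⌋` equals `(W ⋆ W)_{ij}`.
(Indices are 0-based here, so the 1-based offset `j − 1` is the value `(j : ℕ)`.) -/
theorem floor_div_distProd_eq (n : ℕ) (hn : 1 ≤ n) (W : Fin n → Fin n → ℤ)
    (W' W'' : Fin n → Fin n → ℤ)
    (hW' : ∀ i j, W' i j = (n : ℤ) * W i j + ((j : ℕ) : ℤ))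
    (hW'' : ∀ i j, W'' i j = (n : ℤ) * W i j)
    (K : Fin n → Fin n → ℤ) (hK : K = distProd W' W'') :
    ∀ i j, ⌊((K i j : ℤ) : ℚ) / (n : ℚ)⌋ = distProd W W i j := by
  intro i j
  set M : ℤ := distProd W W i j with hM
  have hnpos : (0 : ℤ) < (n : ℤ) := by exact_mod_cast hn
  -- lower bound : n*M ≤ K i j
  have hlow : (n : ℤ) * M ≤ K i j := by
    rw [hK]
    apply Finset.le_inf'
    intro k _
    have h1 : M ≤ W i k + W k j := Finset.inf'_le _ (Finset.mem_univ k)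
    have h2 : (n : ℤ) * M ≤ (n : ℤ) * (W i k + W k j) :=
      mul_le_mul_of_nonneg_left h1 (le_of_lt hnpos)
    have hk0 : (0 : ℤ) ≤ ((k : ℕ) : ℤ) := Int.ofNat_nonneg _
    rw [hW', hW'']
    linarith [h2]
  -- upper bound : K i j < n*(M+1)
  have hup : K i j < (n : ℤ) * (M + 1) := by
    obtain ⟨k, _, hk⟩ := Finset.exists_mem_eq_inf' (⟨i, Finset.mem_univ i⟩ :
      (Finset.univ : Finset (Fin n)).Nonempty) (fun k => W i k + W k j)
    have hKle : K i j ≤ W' i k + W'' k j := by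
      rw [hK]; exact Finset.inf'_le _ (Finset.mem_univ k)
    have hkn : ((k : ℕ) : ℤ) < (n : ℤ) := by exact_mod_cast k.isLt
    have hMeq : M = W i k + W k j := hk
    rw [hW', hW''] at hKle
    have : (n : ℤ) * W i k + (n : ℤ) * W k j = (n : ℤ) * M := by
      rw [hMeq]; ring
    nlinarith
  rw [Rat.floor_intCast_div_natCast]
  have h1 : M ≤ K i j / (n : ℤ) := (Int.le_ediv_iff_mul_le hnpos).2 (by linarith)
  have h2 : K i j / (n : ℤ) < M + 1 := (Int.ediv_lt_iff_lt_mul hnpos).2 (by linarith)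
  omega
end

section
/- Let n ≥ 1 and let W be an n×n integer matrix. Define n×n matrices W' and W'' by W'_{ij} = n·W_{ij} + (j−1) and W''_{ij} = n·W_{ij}, and let K = W' ⋆ W'' be their distance product. Then for all indices i, j, (K_{ij} mod n) + 1 equals the smallest k ∈ {1,…,n} such that W_{ik} + W_{kj} = (W ⋆ W)_{ij}; in particular, the matrix (K mod n) + 1 is a witness matrix for the distance-product square W ⋆ W. -/
open Finset

theorem Nat.sInf_one_le_and_sub_one (P : ℕ → Prop) (h : ∃ k, P k) :
    sInf {k | 1 ≤ k ∧ P (k - 1)} = sInf {k | P k} + 1 := by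
  obtain ⟨k, hk⟩ := h
  have hpos : 1 ≤ sInf {k | 1 ≤ k ∧ P (k - 1)} :=
    le_csInf ⟨k + 1, by simpa using hk⟩ fun _ hm => hm.1
  rw [← Nat.sInf_add hpos]
  simp

section LeastArgmin

variable {n : ℕ} (f : Fin n → ℤ) (hne : (univ : Finset (Fin n)).Nonempty)

noncomputable def leastArgmin : ℕ :=
  sInf {k : ℕ | ∃ hk : k < n, f ⟨k, hk⟩ = univ.inf' hne f}

theorem leastArgmin_spec :
    ∃ hk : leastArgmin f hne < n, f ⟨leastArgmin f hne, hk⟩ = univ.inf' hne f := by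
  obtain ⟨k, -, hk⟩ := exists_mem_eq_inf' hne f
  exact Nat.sInf_mem (s := {k : ℕ | ∃ hk : k < n, f ⟨k, hk⟩ = univ.inf' hne f})
    ⟨k, k.isLt, hk.symm⟩

theorem leastArgmin_le {k : Fin n} (hk : f k = univ.inf' hne f) : leastArgmin f hne ≤ k :=
  Nat.sInf_le ⟨k.isLt, hk⟩

theorem inf'_mul_add_val_eq :
    univ.inf' hne (fun k => (n : ℤ) * f k + k) = n * univ.inf' hne f + leastArgmin f hne := by
  obtain ⟨hm, hfm⟩ := leastArgmin_spec f hne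
  apply le_antisymm
  · rw [← hfm]
    exact inf'_le (fun k => (n : ℤ) * f k + k) (mem_univ ⟨_, hm⟩)
  · refine le_inf' _ _ fun k _ => ?_
    rcases (inf'_le f (mem_univ k)).eq_or_lt with hk | hk
    · rw [← hk]
      gcongr
      exact_mod_cast leastArgmin_le f hne hk.symm
    · calc (n : ℤ) * univ.inf' hne f + leastArgmin f hne
          ≤ n * univ.inf' hne f + n := by omega
        _ = n * (univ.inf' hne f + 1) := by ring
        _ ≤ n * f k := by gcongr; exact hk
        _ ≤ n * f k + k := by omega

theorem inf'_mul_add_val_emod :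
    univ.inf' hne (fun k => (n : ℤ) * f k + k) % n = leastArgmin f hne := by
  rw [inf'_mul_add_val_eq, add_comm, Int.add_mul_emod_self_left]
  exact Int.emod_eq_of_lt (by positivity) (by exact_mod_cast (leastArgmin_spec f hne).1)

end LeastArgmin

theorem mod_add_one_eq_smallest_witness_general (n : ℕ) (W : Fin n → Fin n → ℤ)
    (W' W'' : Fin n → Fin n → ℤ)
    (hW' : ∀ i j, W' i j = (n : ℤ) * W i j + ((j : ℕ) : ℤ))
    (hW'' : ∀ i j, W'' i j = (n : ℤ) * W i j)
    (K : Fin n → Fin n → ℤ) (hK : K = distProd W' W'') :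
    ∀ i j, K i j % (n : ℤ) + 1 =
      ((sInf {k : ℕ | 1 ≤ k ∧ ∃ h : k - 1 < n,
          W i ⟨k - 1, h⟩ + W ⟨k - 1, h⟩ j = distProd W W i j} : ℕ) : ℤ) := by
  intro i j
  have hne : (univ : Finset (Fin n)).Nonempty := ⟨i, mem_univ i⟩
  set f : Fin n → ℤ := fun k => W i k + W k j
  have hKij : K i j = univ.inf' hne (fun k => (n : ℤ) * f k + k) := by
    simp only [hK, distProd, hW', hW'', f, mul_add, add_right_comm]
  have hshift := Nat.sInf_one_le_and_sub_one (fun k => ∃ hk : k < n, f ⟨k, hk⟩ = univ.inf' hne f)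
    ⟨_, leastArgmin_spec f hne⟩
  rw [hKij, inf'_mul_add_val_emod]
  exact_mod_cast (congrArg Nat.cast hshift).symm

/-- With `W'_{ij} = n·W_{ij} + (j−1)` and `W''_{ij} = n·W_{ij}`
and `K = W' ⋆ W''`, the quantity `(K_{ij} mod n) + 1` equals the smallest
`k ∈ {1,…,n}` such that `W_{ik} + W_{kj} = (W ⋆ W)_{ij}`; in particular,
`(K mod n) + 1` is a witness matrix for the distance-product square `W ⋆ W`.
(Indices are 0-based here, so the 1-based index `k` corresponds to the entry at
`⟨k-1, _⟩`, and the 1-based offset `j − 1` is the value `(j : ℕ)`.) -/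
theorem mod_add_one_eq_smallest_witness (n : ℕ) (hn : 1 ≤ n) (W : Fin n → Fin n → ℤ)
    (W' W'' : Fin n → Fin n → ℤ)
    (hW' : ∀ i j, W' i j = (n : ℤ) * W i j + ((j : ℕ) : ℤ))
    (hW'' : ∀ i j, W'' i j = (n : ℤ) * W i j)
    (K : Fin n → Fin n → ℤ) (hK : K = distProd W' W'') :
    ∀ i j, K i j % (n : ℤ) + 1 =
      ((sInf {k : ℕ | 1 ≤ k ∧ ∃ h : k - 1 < n,
          W i ⟨k - 1, h⟩ + W ⟨k - 1, h⟩ j = distProd W W i j} : ℕ) : ℤ) :=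
  mod_add_one_eq_smallest_witness_general n W W' W'' hW' hW'' K hK
end

section
/- Let n ≥ 1, let W be an n×n weight matrix with entries in ℕ ∪ {∞}, let d denote the shortest-walk distance induced by W, let Z ⊆ {1,…,n} be a nonempty set of terminals, and for each vertex v let s(v) be the chosen nearest terminal of v. If vertices v and u satisfy W(v,u) < ∞ and d(v, s(v)) = W(v,u) + d(u, s(v)) (i.e., u is a first hop on a shortest walk from v to its chosen terminal), then s(u) = s(v). -/
/-- The weight of the walk `q 0, q 1, …, q m` (a walk with `m` edges):
`Σ_{i<m} W (q i) (q (i+1))`. The empty walk (`m = 0`) has weight `0`. -/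
def walkWeight {n : ℕ} (W : Fin n → Fin n → ℕ∞) {m : ℕ}
    (q : Fin (m + 1) → Fin n) : ℕ∞ :=
  ∑ i : Fin m, W (q i.castSucc) (q i.succ)

/-- The shortest-walk distance `d(u,v)`: the infimum over all walks of any length
from `u` to `v` of the walk weight. -/
noncomputable def walkDist {n : ℕ} (W : Fin n → Fin n → ℕ∞) (u v : Fin n) : ℕ∞ :=
  ⨅ m : ℕ,
    (Finset.univ.filter fun q : Fin (m + 1) → Fin n =>
        q 0 = u ∧ q (Fin.last m) = v).inf
      fun q => walkWeight W q

lemma walkDist_le_edge_add {n : ℕ} (W : Fin n → Fin n → ℕ∞) (v u z : Fin n) :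
    walkDist W v z ≤ W v u + walkDist W u z := by
  obtain ⟨m, hm⟩ := ciInf_mem (fun m : ℕ =>
    (Finset.univ.filter fun q : Fin (m + 1) → Fin n =>
        q 0 = u ∧ q (Fin.last m) = z).inf fun q => walkWeight W q)
  set g : ℕ∞ := (Finset.univ.filter fun q : Fin (m + 1) → Fin n =>
      q 0 = u ∧ q (Fin.last m) = z).inf (fun q => walkWeight W q) with hg
  have hm' : walkDist W u z = g := hm.symm
  rw [hm']
  by_cases htop : g = ⊤
  · rw [htop]
    simp
  · have hne : (Finset.univ.filter fun q : Fin (m + 1) → Fin n =>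
        q 0 = u ∧ q (Fin.last m) = z).Nonempty := by
      by_contra h
      rw [Finset.not_nonempty_iff_eq_empty] at h
      rw [hg, h] at htop
      simp at htop
    obtain ⟨q, hqmem, hq⟩ := Finset.exists_mem_eq_inf _ hne
      (fun q : Fin (m + 1) → Fin n => walkWeight W q)
    simp only [Finset.mem_filter] at hqmem
    obtain ⟨-, hq0, hql⟩ := hqmem
    set q' : Fin (m + 2) → Fin n := Fin.cases v q with hq'
    have hq'0 : q' 0 = v := rfl
    have hq's : ∀ i : Fin (m + 1), q' i.succ = q i := fun i => Fin.cases_succ i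
    have hmem' : q' ∈ (Finset.univ.filter fun r : Fin (m + 1 + 1) → Fin n =>
        r 0 = v ∧ r (Fin.last (m + 1)) = z) := by
      simp only [Finset.mem_filter, Finset.mem_univ, true_and]
      refine ⟨hq'0, ?_⟩
      have : Fin.last (m + 1) = (Fin.last m).succ := rfl
      rw [this, hq's, hql]
    have hw : walkWeight W q' = W v u + walkWeight W q := by
      rw [walkWeight, Fin.sum_univ_succ]
      have hrest : ∀ i : Fin m, W (q' i.succ.castSucc) (q' i.succ.succ)
          = W (q i.castSucc) (q i.succ) := fun i => by
        rw [← Fin.succ_castSucc, hq's, hq's]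
      rw [Fin.castSucc_zero, hq'0, hq's, hq0, walkWeight]
      exact congrArg _ (Finset.sum_congr rfl fun i _ => hrest i)
    calc walkDist W v z ≤ (Finset.univ.filter fun r : Fin (m + 1 + 1) → Fin n =>
          r 0 = v ∧ r (Fin.last (m + 1)) = z).inf (fun r => walkWeight W r) :=
        iInf_le _ (m + 1)
      _ ≤ walkWeight W q' := Finset.inf_le hmem'
      _ = W v u + g := by rw [hw, hg, hq]

/-- `s` assigns to each vertex its chosen nearest terminal: `s x` is the terminal
`z ∈ Z` minimizing the pair `(d(x,z), z)` lexicographically (nearest terminal,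
ties broken by smallest label). -/
def ChosenNearestTerminal {n : ℕ} (W : Fin n → Fin n → ℕ∞) (Z : Finset (Fin n))
    (s : Fin n → Fin n) : Prop :=
  ∀ x, s x ∈ Z ∧ ∀ z ∈ Z,
    walkDist W x (s x) < walkDist W x z ∨
      (walkDist W x (s x) = walkDist W x z ∧ ((s x : ℕ) ≤ (z : ℕ)))

/-- If `W(v,u) < ∞` and `d(v, s(v)) = W(v,u) + d(u, s(v))`
(i.e. `u` is a first hop on a shortest walk from `v` to its chosen terminal),
then `s(u) = s(v)`. -/
theorem chosen_terminal_of_first_hop (n : ℕ) (hn : 1 ≤ n)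
    (W : Fin n → Fin n → ℕ∞) (Z : Finset (Fin n)) (hZ : Z.Nonempty)
    (s : Fin n → Fin n) (hs : ChosenNearestTerminal W Z s)
    (v u : Fin n) (hWu : W v u < ⊤)
    (hhop : walkDist W v (s v) = W v u + walkDist W u (s v)) :
    s u = s v := by
  have hWne : W v u ≠ ⊤ := hWu.ne
  have hsu := hs u
  have hsv := hs v
  -- d(u, s u) = d(u, s v)
  have h1 : walkDist W u (s u) = walkDist W u (s v) ∧ ((s u : ℕ) ≤ (s v : ℕ)) := by
    rcases hsu.2 (s v) hsv.1 with h | h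
    · exfalso
      have hlt : W v u + walkDist W u (s u) < W v u + walkDist W u (s v) :=
        WithTop.add_lt_add_left hWne h
      have hle : walkDist W v (s u) ≤ W v u + walkDist W u (s u) :=
        walkDist_le_edge_add W v u (s u)
      have : walkDist W v (s u) < walkDist W v (s v) := by
        rw [hhop]; exact lt_of_le_of_lt hle hlt
      rcases hsv.2 (s u) hsu.1 with h' | h'
      · exact absurd this (not_lt.mpr h'.le)
      · exact absurd this (not_lt.mpr h'.1.le)
    · exact h
  -- d(v, s u) ≤ d(v, s v), combined with optimality of s v
  have h2 : walkDist W v (s u) ≤ walkDist W v (s v) := by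
    calc walkDist W v (s u) ≤ W v u + walkDist W u (s u) := walkDist_le_edge_add W v u (s u)
      _ = W v u + walkDist W u (s v) := by rw [h1.1]
      _ = walkDist W v (s v) := hhop.symm
  have h3 : (s v : ℕ) ≤ (s u : ℕ) := by
    rcases hsv.2 (s u) hsu.1 with h | h
    · exact absurd h2 (not_le.mpr h)
    · exact h.2
  exact Fin.ext (le_antisymm h1.2 h3)
end

section
/- Let q ≥ 1 be a natural number, set n = q^4, and let V = {1,…,n}. Let W be an integer weight function on pairs of elements of V, let S ⊆ V×V satisfy Γ(u,v) ≤ 90·log₂ n for every (u,v) ∈ S, let U_i, U_j ⊆ V be sets with |U_i| = |U_j| = q^3, and let U'_1, …, U'_{q²} be pairwise disjoint subsets of V, with Δ_k defined accordingly for k ∈ {1,…,q²}. Let α ≥ 1 be a natural number and let A ⊆ {1,…,q²} be a set of indices such that 8·|Δ_k| ≥ 2^α·n for every k ∈ A. Then |A|·2^α ≤ 720·q²·log₂ n (i.e., |A| ≤ 720·√n·log₂(n)/2^α). -/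
abbrev NegTriangle {V : Type*} (W : V → V → ℤ) (u v w : V) : Prop :=
  W u v + W v w + W w u < 0

/-- `Γ(u,v)`: the number of `w` such that `(u,v,w)` is a negative triangle. -/
def gammaCount (n : ℕ) (W : Fin n → Fin n → ℤ) (u v : Fin n) : ℕ :=
  (Finset.univ.filter fun w => NegTriangle W u v w).card

/-- `Δ_k`: the pairs `(u,v) ∈ (U_i × U_j) ∩ S` having a negative-triangle partner
`w ∈ U'_k`. -/
def deltaSet (n : ℕ) (W : Fin n → Fin n → ℤ) (S : Finset (Fin n × Fin n))
    (Ui Uj U'k : Finset (Fin n)) : Finset (Fin n × Fin n) :=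
  ((Ui ×ˢ Uj) ∩ S).filter fun p => ∃ w ∈ U'k, NegTriangle W p.1 p.2 w

/-! Double counting of the pairs `(p, k)` with `p ∈ Δ_k`. Since the blocks `U'_k` are disjoint,
distinct blocks `k` with `p ∈ Δ_k` supply distinct triangle partners `w` of `p`, so each
`p ∈ (U_i × U_j) ∩ S` is counted at most `Γ(p) ≤ 90·log₂ n` times. Hence
`|A|·2^α·n/8 ≤ ∑_{k ∈ A} |Δ_k| ≤ q⁶·90·log₂ n`, and `n = q⁴`. -/

open Finset Function

theorem card_filter_exists_mem_le_card_filter {ι α : Type*} [Fintype α] {U : ι → Finset α}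
    (hU : Pairwise (Disjoint on U)) (A : Finset ι) (P : α → Prop) [DecidablePred P] :
    #{k ∈ A | ∃ w ∈ U k, P w} ≤ #{w | P w} := by
  classical
  set B := {k ∈ A | ∃ w ∈ U k, P w}
  calc #B = ∑ _k ∈ B, 1 := card_eq_sum_ones B
    _ ≤ ∑ k ∈ B, #{w ∈ U k | P w} := sum_le_sum fun k hk => by
        obtain ⟨w, hw, hPw⟩ := (mem_filter.mp hk).2
        exact card_pos.mpr ⟨w, mem_filter.mpr ⟨hw, hPw⟩⟩
    _ = #(B.biUnion fun k => {w ∈ U k | P w}) :=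
        (card_biUnion fun k _ l _ hkl => (hU hkl).mono (filter_subset _ _) (filter_subset _ _)).symm
    _ ≤ #{w | P w} := card_le_card fun w hw => by
        obtain ⟨k, -, hw⟩ := mem_biUnion.mp hw
        exact mem_filter.mpr ⟨mem_univ w, (mem_filter.mp hw).2⟩

section DeltaSet

variable {n : ℕ} (W : Fin n → Fin n → ℤ) (S : Finset (Fin n × Fin n)) (Ui Uj : Finset (Fin n))
  {ι : Type*} {U' : ι → Finset (Fin n)}

theorem card_filter_mem_deltaSet_le_gammaCount (hU' : Pairwise (Disjoint on U')) (A : Finset ι)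
    (p : Fin n × Fin n) :
    #{k ∈ A | p ∈ deltaSet n W S Ui Uj (U' k)} ≤ gammaCount n W p.1 p.2 :=
  (card_le_card fun k hk => by
    simp only [deltaSet, mem_filter] at hk ⊢
    exact ⟨hk.1, hk.2.2⟩).trans (card_filter_exists_mem_le_card_filter hU' A _)

theorem sum_card_deltaSet_le_sum_gammaCount (hU' : Pairwise (Disjoint on U')) (A : Finset ι) :
    ∑ k ∈ A, #(deltaSet n W S Ui Uj (U' k)) ≤ ∑ p ∈ (Ui ×ˢ Uj) ∩ S, gammaCount n W p.1 p.2 := by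
  have hsub k : deltaSet n W S Ui Uj (U' k) ⊆ (Ui ×ˢ Uj) ∩ S := filter_subset _ _
  calc ∑ k ∈ A, #(deltaSet n W S Ui Uj (U' k))
      = ∑ k ∈ A,
          #(((Ui ×ˢ Uj) ∩ S).bipartiteAbove (fun k p => p ∈ deltaSet n W S Ui Uj (U' k)) k) :=
        sum_congr rfl fun k _ => by
          rw [bipartiteAbove, filter_mem_eq_inter, inter_eq_right.mpr (hsub k)]
    _ = ∑ p ∈ (Ui ×ˢ Uj) ∩ S, #{k ∈ A | p ∈ deltaSet n W S Ui Uj (U' k)} :=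
        sum_card_bipartiteAbove_eq_sum_card_bipartiteBelow _
    _ ≤ _ := sum_le_sum fun p _ => card_filter_mem_deltaSet_le_gammaCount W S Ui Uj hU' A p

end DeltaSet

theorem card_blocks_with_many_triangle_pairs_general (q : ℕ) (hq : 1 ≤ q)
    (W : Fin (q ^ 4) → Fin (q ^ 4) → ℤ)
    (S : Finset (Fin (q ^ 4) × Fin (q ^ 4)))
    (hS : ∀ p ∈ S, (gammaCount (q ^ 4) W p.1 p.2 : ℝ) ≤ 90 * Real.logb 2 ((q : ℝ) ^ 4))
    (Ui Uj : Finset (Fin (q ^ 4))) (hUi : Ui.card = q ^ 3) (hUj : Uj.card = q ^ 3)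
    (U' : Fin (q ^ 2) → Finset (Fin (q ^ 4)))
    (hdisj : ∀ k l : Fin (q ^ 2), k ≠ l → Disjoint (U' k) (U' l))
    (α : ℕ)
    (A : Finset (Fin (q ^ 2)))
    (hA : ∀ k ∈ A, 2 ^ α * q ^ 4 ≤ 8 * (deltaSet (q ^ 4) W S Ui Uj (U' k)).card) :
    (A.card : ℝ) * 2 ^ α ≤ 720 * (q : ℝ) ^ 2 * Real.logb 2 ((q : ℝ) ^ 4) := by
  set T := (Ui ×ˢ Uj) ∩ S
  set L := Real.logb 2 ((q : ℝ) ^ 4)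
  have hL : 0 ≤ L := Real.logb_nonneg one_lt_two (one_le_pow₀ (by exact_mod_cast hq))
  have hT : (#T : ℝ) ≤ (q : ℝ) ^ 6 := by
    have : #T ≤ q ^ 6 := (card_le_card inter_subset_left).trans_eq <| by
      rw [card_product, hUi, hUj, ← pow_add]
    exact_mod_cast this
  have hpairs : (∑ k ∈ A, #(deltaSet (q ^ 4) W S Ui Uj (U' k)) : ℝ) ≤ (q : ℝ) ^ 6 * (90 * L) :=
    calc (∑ k ∈ A, #(deltaSet (q ^ 4) W S Ui Uj (U' k)) : ℝ)
        ≤ ∑ p ∈ T, (gammaCount (q ^ 4) W p.1 p.2 : ℝ) := by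
          exact_mod_cast sum_card_deltaSet_le_sum_gammaCount W S Ui Uj hdisj A
      _ ≤ ∑ _p ∈ T, 90 * L := sum_le_sum fun p hp => hS p (mem_inter.mp hp).2
      _ = #T * (90 * L) := by rw [sum_const, nsmul_eq_mul]
      _ ≤ (q : ℝ) ^ 6 * (90 * L) := by gcongr
  have hblocks : (#A : ℝ) * (2 ^ α * (q : ℝ) ^ 4)
      ≤ 8 * (∑ k ∈ A, #(deltaSet (q ^ 4) W S Ui Uj (U' k)) : ℝ) := by
    have := card_nsmul_le_sum A _ _ hA
    rw [smul_eq_mul, ← mul_sum] at this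
    exact_mod_cast this
  have hq4 : (0 : ℝ) < (q : ℝ) ^ 4 := by positivity
  rw [← mul_le_mul_iff_of_pos_right hq4]
  linear_combination hblocks + 8 * hpairs

/-- With `n = q⁴`, a promise `Γ(u,v) ≤ 90·log₂ n` on every pair of
`S`, parts `U_i, U_j` of size `q³`, pairwise disjoint blocks `U'_1, …, U'_{q²}`, and
a set `A` of block indices `k` with `8·|Δ_k| ≥ 2^α·n` (for some `α ≥ 1`), one has
`|A|·2^α ≤ 720·q²·log₂ n`, i.e. `|A| ≤ 720·√n·log₂(n)/2^α`. -/
theorem card_blocks_with_many_triangle_pairs (q : ℕ) (hq : 1 ≤ q)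
    (W : Fin (q ^ 4) → Fin (q ^ 4) → ℤ)
    (S : Finset (Fin (q ^ 4) × Fin (q ^ 4)))
    (hS : ∀ p ∈ S, (gammaCount (q ^ 4) W p.1 p.2 : ℝ) ≤ 90 * Real.logb 2 ((q : ℝ) ^ 4))
    (Ui Uj : Finset (Fin (q ^ 4))) (hUi : Ui.card = q ^ 3) (hUj : Uj.card = q ^ 3)
    (U' : Fin (q ^ 2) → Finset (Fin (q ^ 4)))
    (hdisj : ∀ k l : Fin (q ^ 2), k ≠ l → Disjoint (U' k) (U' l))
    (α : ℕ) (hα : 1 ≤ α)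
    (A : Finset (Fin (q ^ 2)))
    (hA : ∀ k ∈ A, 2 ^ α * q ^ 4 ≤ 8 * (deltaSet (q ^ 4) W S Ui Uj (U' k)).card) :
    (A.card : ℝ) * 2 ^ α ≤ 720 * (q : ℝ) ^ 2 * Real.logb 2 ((q : ℝ) ^ 4) :=
  card_blocks_with_many_triangle_pairs_general q hq W S hS Ui Uj hUi hUj U' hdisj α A hA
end
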